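/- arXiv:2411.16988 — 3 statements merged into one kernel-verified Lean document; each statement's English description precedes it below -/
import Mathlib

section
/- Let L, M, N be positive integers and let g_0, …, g_{L−1} ∈ ℓ²(ℤ²,ℍ). If the Gabor system G(g,L,M,N) is a frame for ℓ²(ℤ²,ℍ) with frame bounds A ≤ B, then for every k ∈ ℤ² one has A/M² ≤ ∑_{l=0}^{L−1} ∑_{n∈ℤ²} |g_l(k − nN)|² ≤ B/M², where nN := (n₁N, n₂N). -/
noncomputable section

open scoped Real

/-- The real quaternions. -/
abbrev ℍ : Type := Quaternion ℝ

/-- `e_i θ = cos θ + (sin θ) i`. -/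
def eI (θ : ℝ) : ℍ := ⟨Real.cos θ, Real.sin θ, 0, 0⟩

/-- `e_j θ = cos θ + (sin θ) j`. -/
def eJ (θ : ℝ) : ℍ := ⟨Real.cos θ, 0, Real.sin θ, 0⟩

/-- Quaternionic pairing `⟨f,g⟩ = ∑ conj (f k) * g k`. -/
def qpair (f g : ℤ × ℤ → ℍ) : ℍ := ∑' k : ℤ × ℤ, star (f k) * g k

/-- Membership in `ℓ²(ℤ², ℍ)`. -/
def MemL2 (f : ℤ × ℤ → ℍ) : Prop := Summable fun k : ℤ × ℤ => ‖f k‖ ^ 2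

/-- `‖f‖² = ∑ |f k|²`. -/
def normSq2 (f : ℤ × ℤ → ℍ) : ℝ := ∑' k : ℤ × ℤ, ‖f k‖ ^ 2

/-- A window is real-valued if all its values lie in `ℝ ⊆ ℍ`. -/
def IsRealValued (f : ℤ × ℤ → ℍ) : Prop := ∀ k : ℤ × ℤ, f k = ((f k).re : ℍ)

/-- The Gabor atom `E_{m/M} T_{nN} w`. -/
def gaborAtom (M N : ℕ) (w : ℤ × ℤ → ℍ) (m : ℕ × ℕ) (n : ℤ × ℤ) : ℤ × ℤ → ℍ :=
  fun k =>
    eI (2 * π * (m.1 : ℝ) * (k.1 : ℝ) / (M : ℝ)) *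
      w (k.1 - n.1 * (N : ℤ), k.2 - n.2 * (N : ℤ)) *
      eJ (2 * π * (m.2 : ℝ) * (k.2 : ℝ) / (M : ℝ))

/-- The index square `{0, …, M-1}²`. -/
abbrev msq (M : ℕ) : Finset (ℕ × ℕ) := Finset.range M ×ˢ Finset.range M

/-- `k ∈ {0, …, N-1}²` inside `ℤ²`. -/
def InNsq (N : ℕ) (k : ℤ × ℤ) : Prop :=
  0 ≤ k.1 ∧ k.1 < (N : ℤ) ∧ 0 ≤ k.2 ∧ k.2 < (N : ℤ)

/-- `∑_{l<L} ∑_{n∈ℤ²} ∑_{m∈{0,…,M-1}²} |⟨E_{m/M}T_{nN}g_l, h⟩|²`. -/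
def frameSum (L M N : ℕ) (g : ℕ → ℤ × ℤ → ℍ) (h : ℤ × ℤ → ℍ) : ℝ :=
  ∑ l ∈ Finset.range L, ∑' n : ℤ × ℤ, ∑ m ∈ msq M,
    ‖qpair (gaborAtom M N (g l) m n) h‖ ^ 2

/-- Bessel system with bound `B`. -/
def IsBessel (L M N : ℕ) (g : ℕ → ℤ × ℤ → ℍ) (B : ℝ) : Prop :=
  ∀ h : ℤ × ℤ → ℍ, MemL2 h → frameSum L M N g h ≤ B * normSq2 h

/-- Frame with bounds `A ≤ B`. -/
def IsFrame (L M N : ℕ) (g : ℕ → ℤ × ℤ → ℍ) (A B : ℝ) : Prop :=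
  ∀ h : ℤ × ℤ → ℍ, MemL2 h →
    A * normSq2 h ≤ frameSum L M N g h ∧ frameSum L M N g h ≤ B * normSq2 h

/-- Parseval frame. -/
def IsParseval (L M N : ℕ) (g : ℕ → ℤ × ℤ → ℍ) : Prop :=
  ∀ h : ℤ × ℤ → ℍ, MemL2 h → frameSum L M N g h = normSq2 h

/-- Orthonormal system. -/
def IsON (L M N : ℕ) (g : ℕ → ℤ × ℤ → ℍ) : Prop :=
  ∀ l l' : ℕ, l < L → l' < L → ∀ m ∈ msq M, ∀ m' ∈ msq M, ∀ n n' : ℤ × ℤ,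
    qpair (gaborAtom M N (g l) m n) (gaborAtom M N (g l') m' n') =
      if l = l' ∧ m = m' ∧ n = n' then 1 else 0

/-- `G(k,p) = ∑_{l<L} ∑_{n∈ℤ²} g_l(k-nN) g_l(k+pM-nN)`. -/
def gaborG (L M N : ℕ) (g : ℕ → ℤ × ℤ → ℍ) (k p : ℤ × ℤ) : ℍ :=
  ∑ l ∈ Finset.range L, ∑' n : ℤ × ℤ,
    g l (k.1 - n.1 * (N : ℤ), k.2 - n.2 * (N : ℤ)) *
      g l (k.1 + p.1 * (M : ℤ) - n.1 * (N : ℤ), k.2 + p.2 * (M : ℤ) - n.2 * (N : ℤ))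

/-- Mixed version: `∑_{l<L} ∑_{n∈ℤ²} g_l(k-nN) h_l(k+pM-nN)`. -/
def gaborGmix (L M N : ℕ) (g h : ℕ → ℤ × ℤ → ℍ) (k p : ℤ × ℤ) : ℍ :=
  ∑ l ∈ Finset.range L, ∑' n : ℤ × ℤ,
    g l (k.1 - n.1 * (N : ℤ), k.2 - n.2 * (N : ℤ)) *
      h l (k.1 + p.1 * (M : ℤ) - n.1 * (N : ℤ), k.2 + p.2 * (M : ℤ) - n.2 * (N : ℤ))

/-- `∑_{l<L} ∑_{n∈ℤ²} |g_l(k-nN)|²`. -/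
def winSum (L N : ℕ) (g : ℕ → ℤ × ℤ → ℍ) (k : ℤ × ℤ) : ℝ :=
  ∑ l ∈ Finset.range L, ∑' n : ℤ × ℤ,
    ‖g l (k.1 - n.1 * (N : ℤ), k.2 - n.2 * (N : ℤ))‖ ^ 2

/-- Support of diameter `< M` in every row and every column. -/
def DiamLt (M : ℕ) (f : ℤ × ℤ → ℍ) : Prop :=
  (∀ k₂ k₁ k₁' : ℤ, f (k₁, k₂) ≠ 0 → f (k₁', k₂) ≠ 0 → |k₁ - k₁'| < (M : ℤ)) ∧
  (∀ k₁ k₂ k₂' : ℤ, f (k₁, k₂) ≠ 0 → f (k₁, k₂') ≠ 0 → |k₂ - k₂'| < (M : ℤ))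

/-- `M`-periodicity. -/
def MPeriodic (M : ℕ) (f : ℤ × ℤ → ℍ) : Prop :=
  ∀ k : ℤ × ℤ, f (k.1 + (M : ℤ), k.2) = f k ∧ f (k.1, k.2 + (M : ℤ)) = f k

/-- Duality of two Gabor systems (on finitely supported sequences). -/
def AreDual (L M N : ℕ) (g h : ℕ → ℤ × ℤ → ℍ) : Prop :=
  ∀ f φ : ℤ × ℤ → ℍ, (Function.support f).Finite → (Function.support φ).Finite →
    (∑ l ∈ Finset.range L, ∑' n : ℤ × ℤ, ∑ m ∈ msq M,
      qpair f (gaborAtom M N (g l) m n) * qpair (gaborAtom M N (h l) m n) φ)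
      = qpair f φ

/-! Test the frame inequality against the unit impulse `δ_k`, which has norm one. Its pairing
with an atom is the conjugate of the atom's value at `k`, and the modulations `e_i`, `e_j` have
modulus one, so each of the `M²` frequencies contributes `|g_l(k - nN)|²`: the frame sum at `δ_k`
is `M² · winSum L N g k`. -/

lemma norm_eI (θ : ℝ) : ‖eI θ‖ = 1 := by
  rw [← Real.sqrt_one, norm_eq_sqrt_real_inner, Quaternion.inner_self,
    Quaternion.normSq_def']
  simp [eI]

lemma norm_eJ (θ : ℝ) : ‖eJ θ‖ = 1 := by
  rw [← Real.sqrt_one, norm_eq_sqrt_real_inner, Quaternion.inner_self,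
    Quaternion.normSq_def']
  simp [eJ]

lemma norm_gaborAtom_apply (M N : ℕ) (w : ℤ × ℤ → ℍ) (m : ℕ × ℕ) (n k : ℤ × ℤ) :
    ‖gaborAtom M N w m n k‖ = ‖w (k.1 - n.1 * (N : ℤ), k.2 - n.2 * (N : ℤ))‖ := by
  simp [gaborAtom, norm_eI, norm_eJ]

lemma memL2_single (k : ℤ × ℤ) (q : ℍ) : MemL2 (Pi.single k q) :=
  summable_of_ne_finset_zero (s := {k}) fun j hj => by
    simp [Pi.single_eq_of_ne (Finset.notMem_singleton.mp hj)]

lemma normSq2_single (k : ℤ × ℤ) (q : ℍ) : normSq2 (Pi.single k q) = ‖q‖ ^ 2 := by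
  rw [normSq2, tsum_eq_single k fun j hj => by simp [Pi.single_eq_of_ne hj]]
  simp

lemma qpair_single (f : ℤ × ℤ → ℍ) (k : ℤ × ℤ) (q : ℍ) :
    qpair f (Pi.single k q) = star (f k) * q := by
  rw [qpair, tsum_eq_single k fun j hj => by simp [Pi.single_eq_of_ne hj]]
  simp

lemma frameSum_single_one (L M N : ℕ) (g : ℕ → ℤ × ℤ → ℍ) (k : ℤ × ℤ) :
    frameSum L M N g (Pi.single k 1) = (M : ℝ) ^ 2 * winSum L N g k := by
  simp only [frameSum, winSum, qpair_single, mul_one, norm_star, norm_gaborAtom_apply,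
    Finset.sum_const, Finset.card_product, Finset.card_range, nsmul_eq_mul, Finset.mul_sum,
    tsum_mul_left]
  push_cast
  simp only [sq]

theorem stmt_0_general (L M N : ℕ) (hM : 0 < M) (g : ℕ → ℤ × ℤ → ℍ) (A B : ℝ)
    (hframe : IsFrame L M N g A B) :
    ∀ k : ℤ × ℤ,
      A / (M : ℝ) ^ 2 ≤ winSum L N g k ∧ winSum L N g k ≤ B / (M : ℝ) ^ 2 := by
  intro k
  have hM2 : (0 : ℝ) < (M : ℝ) ^ 2 := by positivity
  obtain ⟨hlower, hupper⟩ := hframe _ (memL2_single k 1)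
  rw [normSq2_single, frameSum_single_one, norm_one, one_pow, mul_one] at hlower hupper
  rw [div_le_iff₀ hM2, le_div_iff₀ hM2, mul_comm]
  exact ⟨hlower, hupper⟩

/-- necessary condition for a quaternionic Gabor frame. -/
theorem stmt_0 (L M N : ℕ) (hL : 0 < L) (hM : 0 < M) (hN : 0 < N)
    (g : ℕ → ℤ × ℤ → ℍ) (hg : ∀ l < L, MemL2 (g l))
    (A B : ℝ) (hA : 0 < A) (hAB : A ≤ B)
    (hframe : IsFrame L M N g A B) :
    ∀ k : ℤ × ℤ,
      A / (M : ℝ) ^ 2 ≤ winSum L N g k ∧ winSum L N g k ≤ B / (M : ℝ) ^ 2 :=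
  stmt_0_general L M N hM g A B hframe
end
end

section
/- Let L, M, N be positive integers, let g_0, …, g_{L−1} ∈ ℓ²(ℤ²,ℍ) be real-valued, and let h : ℤ×ℤ → ℍ be finitely supported. Then ∑_{l=0}^{L−1} ∑_{n∈ℤ²} ∑_{m∈{0,…,M−1}²} |⟨E_{m/M}T_{nN}g_l, h⟩|² = F₁(h) + F₂(h), where F₁(h) := M² ∑_{k∈ℤ²} |h(k)|² · G(k,0) and F₂(h) := M² ∑_{k∈ℤ²} ∑_{p∈ℤ², p≠0} conj(h(k))·h(k+pM)·G(k,p), with G(k,p) := ∑_{l=0}^{L−1} ∑_{n∈ℤ²} g_l(k−nN)·g_l(k+pM−nN), nN := (n₁N,n₂N) and pM := (p₁M,p₂M). -/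
noncomputable section

open scoped Real

/-!
Since the windows are real, they commute with every quaternion, so
`|⟨E_{m/M}T_{nN}g_l, h⟩|² = conj q · q` expands into a double sum over `k, k'` in the support
of `h` whose `m`-dependence is `e_i(2πm₁k₁/M) e_j(2πm₂(k₂-k₂')/M) e_i(-2πm₁k₁'/M)`.
Summing over `m₂` first turns the middle factor into the real scalar `M·[M ∣ k₂-k₂']`; the two
`i`-phases then meet and the `m₁`-sum gives `M·[M ∣ k₁-k₁']`. Both are geometric sums of a
primitive `M`-th root of unity, transported from `ℂ` along the embeddings `i ↦ i` and `i ↦ j`.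
The sums over `n` and `l` produce `G`, and writing `k' = k + pM` splits the surviving terms into
`p = 0` (`F₁`) and `p ≠ 0` (`F₂`).
-/

open Finset

lemma summable_mul_of_summable_norm_sq {ι R : Type*} [NormedRing R] [CompleteSpace R]
    {f g : ι → R} (hf : Summable fun i => ‖f i‖ ^ 2) (hg : Summable fun i => ‖g i‖ ^ 2) :
    Summable fun i => f i * g i :=
  (hf.add hg).of_norm_bounded fun i => (norm_mul_le _ _).trans <| by
    nlinarith [sq_nonneg (‖f i‖ - ‖g i‖), norm_nonneg (f i), norm_nonneg (g i)]

lemma Summable.add_tsum_subtype_ne {β α : Type*} [AddCommGroup α] [UniformSpace α]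
    [IsUniformAddGroup α] [CompleteSpace α] [T2Space α] {f : β → α} (hf : Summable f) (b : β) :
    f b + ∑' x : {x // x ≠ b}, f x = ∑' x, f x := by
  rw [← hf.tsum_subtype_add_tsum_subtype_compl {b}, tsum_singleton]
  rfl

lemma Quaternion.coe_sum {ι : Type*} (t : Finset ι) (f : ι → ℝ) :
    ((∑ i ∈ t, f i : ℝ) : ℍ) = ∑ i ∈ t, (f i : ℍ) := by
  simp only [← Quaternion.algebraMap_def, map_sum]

lemma Quaternion.coe_norm_sq_eq_star_mul_self (q : ℍ) : ((‖q‖ ^ 2 : ℝ) : ℍ) = star q * q := by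
  rw [Quaternion.star_mul_self, Quaternion.normSq_eq_norm_mul_self, sq]

section Phases

open Complex

lemma sum_range_exp_mul_exp {M : ℕ} (hM : M ≠ 0) (k k' : ℤ) :
    ∑ m ∈ range M, exp (↑(2 * π * m * k / M) * I) * exp (↑(-(2 * π * m * k' / M)) * I) =
      if (M : ℤ) ∣ k - k' then (M : ℂ) else 0 := by
  set ζ := exp (2 * π * I / M)
  have hζ : IsPrimitiveRoot ζ M := isPrimitiveRoot_exp M hM
  have hterm (m : ℕ) :
      exp (↑(2 * π * m * k / M) * I) * exp (↑(-(2 * π * m * k' / M)) * I) = (ζ ^ (k - k')) ^ m := by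
    rw [← exp_add, ← exp_int_mul, ← exp_nat_mul]
    congr 1
    push_cast
    ring
  simp_rw [hterm]
  split_ifs with hd
  · simp [(hζ.zpow_eq_one_iff_dvd _).2 hd]
  · rw [geom_sum_eq (mt (hζ.zpow_eq_one_iff_dvd _).1 hd), ← zpow_natCast, ← zpow_mul, mul_comm,
      zpow_mul, zpow_natCast, hζ.pow_eq_one, one_zpow, sub_self, zero_div]

lemma sum_range_map_exp_mul_exp {A : Type*} [Ring A] [Algebra ℝ A] (φ : ℂ →ₐ[ℝ] A) {M : ℕ}
    (hM : M ≠ 0) (k k' : ℤ) :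
    ∑ m ∈ range M, φ (exp (↑(2 * π * m * k / M) * I)) * φ (exp (↑(-(2 * π * m * k' / M)) * I)) =
      if (M : ℤ) ∣ k - k' then (M : A) else 0 := by
  simp_rw [← map_mul, ← map_sum, sum_range_exp_mul_exp hM, apply_ite φ, map_natCast, map_zero]

lemma eJ_pi_div_two_mul_self : eJ (π / 2) * eJ (π / 2) = -1 := by
  apply Quaternion.ext <;>
    simp only [Quaternion.re_mul, Quaternion.imI_mul, Quaternion.imJ_mul, Quaternion.imK_mul,
      Quaternion.re_neg, Quaternion.imI_neg, Quaternion.imJ_neg, Quaternion.imK_neg,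
      Quaternion.re_one, Quaternion.imI_one, Quaternion.imJ_one, Quaternion.imK_one] <;>
    simp [eJ]

def unitJ : {q : ℍ // q * q = -1} := ⟨eJ (π / 2), eJ_pi_div_two_mul_self⟩

lemma eI_eq_ofComplex (θ : ℝ) : eI θ = Quaternion.ofComplex (exp (θ * I)) := by
  rw [exp_mul_I]
  apply Quaternion.ext <;> simp [eI, ← ofReal_cos, ← ofReal_sin]

lemma eJ_eq_lift (θ : ℝ) : eJ θ = Complex.lift unitJ (exp (θ * I)) := by
  rw [exp_mul_I, Complex.lift_apply, liftAux_apply]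
  apply Quaternion.ext <;>
    simp only [Quaternion.re_add, Quaternion.imI_add, Quaternion.imJ_add, Quaternion.imK_add,
      Quaternion.re_smul, Quaternion.imI_smul, Quaternion.imJ_smul, Quaternion.imK_smul] <;>
    simp [eJ, unitJ, ← ofReal_cos, ← ofReal_sin]

end Phases

lemma star_eI (θ : ℝ) : star (eI θ) = eI (-θ) := by
  apply Quaternion.ext <;>
    simp only [Quaternion.re_star, Quaternion.imI_star, Quaternion.imJ_star,
      Quaternion.imK_star] <;>
    simp [eI]

lemma star_eJ (θ : ℝ) : star (eJ θ) = eJ (-θ) := by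
  apply Quaternion.ext <;>
    simp only [Quaternion.re_star, Quaternion.imI_star, Quaternion.imJ_star,
      Quaternion.imK_star] <;>
    simp [eJ]

lemma sum_range_eI_mul_eI {M : ℕ} (hM : M ≠ 0) (k k' : ℤ) :
    ∑ m ∈ range M, eI (2 * π * m * k / M) * eI (-(2 * π * m * k' / M)) =
      if (M : ℤ) ∣ k - k' then (M : ℍ) else 0 := by
  simp_rw [eI_eq_ofComplex]
  exact sum_range_map_exp_mul_exp _ hM k k'

lemma sum_range_eJ_mul_eJ {M : ℕ} (hM : M ≠ 0) (k k' : ℤ) :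
    ∑ m ∈ range M, eJ (2 * π * m * k / M) * eJ (-(2 * π * m * k' / M)) =
      if (M : ℤ) ∣ k - k' then (M : ℍ) else 0 := by
  simp_rw [eJ_eq_lift]
  exact sum_range_map_exp_mul_exp _ hM k k'

lemma IsRealValued.commute {w : ℤ × ℤ → ℍ} (hw : IsRealValued w) (k : ℤ × ℤ) (q : ℍ) :
    Commute (w k) q := by
  rw [hw k]
  exact Quaternion.coe_commute _ q

lemma IsRealValued.star_eq {w : ℤ × ℤ → ℍ} (hw : IsRealValued w) (k : ℤ × ℤ) :
    star (w k) = w k := by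
  rw [hw k, Quaternion.star_coe]

lemma gaborAtom_mul_star_gaborAtom {M N : ℕ} {w : ℤ × ℤ → ℍ} (hw : IsRealValued w)
    (m : ℕ × ℕ) (n k k' : ℤ × ℤ) :
    gaborAtom M N w m n k * star (gaborAtom M N w m n k') =
      w (k.1 - n.1 * N, k.2 - n.2 * N) * w (k'.1 - n.1 * N, k'.2 - n.2 * N) *
        (eI (2 * π * m.1 * k.1 / M) *
          (eJ (2 * π * m.2 * k.2 / M) * eJ (-(2 * π * m.2 * k'.2 / M))) *
            eI (-(2 * π * m.1 * k'.1 / M))) := by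
  simp only [gaborAtom, star_mul, star_eI, star_eJ, hw.star_eq]
  rw [hw (k.1 - n.1 * N, k.2 - n.2 * N), hw (k'.1 - n.1 * N, k'.2 - n.2 * N)]
  simp only [Quaternion.coe_mul_eq_smul, Quaternion.mul_coe_eq_smul, smul_mul_assoc,
    mul_smul_comm, smul_smul, mul_assoc, mul_comm]

lemma sum_msq_gaborAtom_mul_star {M N : ℕ} (hM : M ≠ 0) {w : ℤ × ℤ → ℍ} (hw : IsRealValued w)
    (n k k' : ℤ × ℤ) :
    ∑ m ∈ msq M, gaborAtom M N w m n k * star (gaborAtom M N w m n k') =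
      if (M : ℤ) ∣ k.1 - k'.1 ∧ (M : ℤ) ∣ k.2 - k'.2 then
        (M : ℍ) ^ 2 * (w (k.1 - n.1 * N, k.2 - n.2 * N) * w (k'.1 - n.1 * N, k'.2 - n.2 * N))
      else 0 := by
  simp_rw [gaborAtom_mul_star_gaborAtom hw, ← mul_sum, sum_product, ← sum_mul, ← mul_sum,
    sum_range_eJ_mul_eJ hM]
  by_cases h₂ : (M : ℤ) ∣ k.2 - k'.2
  · have hcomm (x y : ℍ) : x * M * y = M * (x * y) := by rw [← Nat.cast_comm, mul_assoc]
    simp_rw [if_pos h₂, hcomm, ← mul_sum, sum_range_eI_mul_eI hM]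
    by_cases h₁ : (M : ℤ) ∣ k.1 - k'.1
    · simp only [h₁, h₂, and_self, if_true, sq, mul_assoc, (Nat.cast_commute M _).eq]
    · simp [h₁]
  · simp [h₂]

lemma qpair_eq_sum (f : ℤ × ℤ → ℍ) {h : ℤ × ℤ → ℍ} {s : Finset (ℤ × ℤ)}
    (hs : ∀ k ∉ s, h k = 0) : qpair f h = ∑ k ∈ s, star (f k) * h k :=
  tsum_eq_sum fun k hk => by rw [hs k hk, mul_zero]

def congrPair (M : ℕ) (h : ℤ × ℤ → ℍ) (k k' : ℤ × ℤ) : ℍ :=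
  if (M : ℤ) ∣ k.1 - k'.1 ∧ (M : ℤ) ∣ k.2 - k'.2 then star (h k) * h k' else 0

lemma sum_msq_norm_sq_qpair_gaborAtom {M N : ℕ} (hM : M ≠ 0) {w h : ℤ × ℤ → ℍ}
    (hw : IsRealValued w) {s : Finset (ℤ × ℤ)} (hs : ∀ k ∉ s, h k = 0) (n : ℤ × ℤ) :
    ∑ m ∈ msq M, ((‖qpair (gaborAtom M N w m n) h‖ ^ 2 : ℝ) : ℍ) =
      (M : ℍ) ^ 2 * ∑ k ∈ s, ∑ k' ∈ s, congrPair M h k k' *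
        (w (k.1 - n.1 * N, k.2 - n.2 * N) * w (k'.1 - n.1 * N, k'.2 - n.2 * N)) := by
  have hexpand (m : ℕ × ℕ) : ((‖qpair (gaborAtom M N w m n) h‖ ^ 2 : ℝ) : ℍ) =
      ∑ k ∈ s, ∑ k' ∈ s,
        star (h k) * (gaborAtom M N w m n k * star (gaborAtom M N w m n k')) * h k' := by
    rw [Quaternion.coe_norm_sq_eq_star_mul_self, qpair_eq_sum _ hs, star_sum, sum_mul_sum]
    simp only [star_mul, star_star, mul_assoc]
  simp_rw [hexpand]
  rw [sum_comm, mul_sum]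
  refine sum_congr rfl fun k _ => ?_
  rw [sum_comm, mul_sum]
  refine sum_congr rfl fun k' _ => ?_
  rw [← sum_mul, ← mul_sum, sum_msq_gaborAtom_mul_star hM hw, congrPair]
  split_ifs
  · have hP : Commute
        (w (k.1 - n.1 * N, k.2 - n.2 * N) * w (k'.1 - n.1 * N, k'.2 - n.2 * N)) (h k') :=
      (hw.commute _ _).mul_left (hw.commute _ _)
    rw [← Nat.cast_pow, ← map_natCast (algebraMap ℝ ℍ), Quaternion.algebraMap_def]
    simp only [Quaternion.coe_mul_eq_smul, mul_smul_comm, smul_mul_assoc, mul_assoc, hP.eq]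
  · simp

lemma injective_sub_mul_nat {N : ℕ} (hN : N ≠ 0) (k : ℤ × ℤ) :
    Function.Injective fun n : ℤ × ℤ => (k.1 - n.1 * N, k.2 - n.2 * N) := by
  have hN' : (N : ℤ) ≠ 0 := by exact_mod_cast hN
  intro a b hab
  simp only [Prod.mk.injEq, sub_right_inj] at hab
  exact Prod.ext (mul_right_cancel₀ hN' hab.1) (mul_right_cancel₀ hN' hab.2)

lemma injective_add_mul_nat {M : ℕ} (hM : M ≠ 0) (k : ℤ × ℤ) :
    Function.Injective fun p : ℤ × ℤ => (k.1 + p.1 * M, k.2 + p.2 * M) := by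
  have hM' : (M : ℤ) ≠ 0 := by exact_mod_cast hM
  intro a b hab
  simp only [Prod.mk.injEq, add_right_inj] at hab
  exact Prod.ext (mul_right_cancel₀ hM' hab.1) (mul_right_cancel₀ hM' hab.2)

lemma MemL2.summable_mul_translate {w : ℤ × ℤ → ℍ} (hw : MemL2 w) {N : ℕ} (hN : N ≠ 0)
    (k k' : ℤ × ℤ) :
    Summable fun n : ℤ × ℤ =>
      w (k.1 - n.1 * N, k.2 - n.2 * N) * w (k'.1 - n.1 * N, k'.2 - n.2 * N) :=
  summable_mul_of_summable_norm_sq (hw.comp_injective (injective_sub_mul_nat hN k))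
    (hw.comp_injective (injective_sub_mul_nat hN k'))

def crossCorr (L N : ℕ) (g : ℕ → ℤ × ℤ → ℍ) (k k' : ℤ × ℤ) : ℍ :=
  ∑ l ∈ range L, ∑' n : ℤ × ℤ,
    g l (k.1 - n.1 * N, k.2 - n.2 * N) * g l (k'.1 - n.1 * N, k'.2 - n.2 * N)

lemma gaborG_eq_crossCorr (L M N : ℕ) (g : ℕ → ℤ × ℤ → ℍ) (k p : ℤ × ℤ) :
    gaborG L M N g k p = crossCorr L N g k (k.1 + p.1 * M, k.2 + p.2 * M) :=
  rfl

lemma coe_frameSum {L M N : ℕ} (hM : M ≠ 0) (hN : N ≠ 0) {g : ℕ → ℤ × ℤ → ℍ}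
    (hg : ∀ l < L, MemL2 (g l)) (hreal : ∀ l < L, IsRealValued (g l)) {h : ℤ × ℤ → ℍ}
    {s : Finset (ℤ × ℤ)} (hs : ∀ k ∉ s, h k = 0) :
    ((frameSum L M N g h : ℝ) : ℍ) =
      (M : ℍ) ^ 2 * ∑ k ∈ s, ∑ k' ∈ s, congrPair M h k k' * crossCorr L N g k k' := by
  have hwindow (l : ℕ) (hl : l ∈ range L) :
      ((∑' n : ℤ × ℤ, ∑ m ∈ msq M, ‖qpair (gaborAtom M N (g l) m n) h‖ ^ 2 : ℝ) : ℍ) =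
        (M : ℍ) ^ 2 * ∑ k ∈ s, ∑ k' ∈ s, congrPair M h k k' * ∑' n : ℤ × ℤ,
          g l (k.1 - n.1 * N, k.2 - n.2 * N) * g l (k'.1 - n.1 * N, k'.2 - n.2 * N) := by
    rw [mem_range] at hl
    have hP (k k' : ℤ × ℤ) := (hg l hl).summable_mul_translate hN k k'
    simp_rw [← Quaternion.tsum_coe, Quaternion.coe_sum,
      sum_msq_norm_sq_qpair_gaborAtom hM (hreal l hl) hs, tsum_mul_left]
    rw [Summable.tsum_finsetSum fun k _ => summable_sum fun k' _ => (hP k k').mul_left _]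
    simp_rw [Summable.tsum_finsetSum fun k' _ => (hP _ k').mul_left _, tsum_mul_left]
  rw [frameSum, Quaternion.coe_sum, sum_congr rfl hwindow, ← mul_sum, sum_comm]
  refine congrArg _ (sum_congr rfl fun k _ => ?_)
  rw [sum_comm]
  simp_rw [crossCorr, mul_sum]

lemma hasSum_shift_eq_sum_congrPair {M : ℕ} (hM : M ≠ 0) {h : ℤ × ℤ → ℍ} {s : Finset (ℤ × ℤ)}
    (hs : ∀ k ∉ s, h k = 0) (C : ℤ × ℤ → ℤ × ℤ → ℍ) (k : ℤ × ℤ) :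
    HasSum (fun p : ℤ × ℤ => star (h k) * h (k.1 + p.1 * M, k.2 + p.2 * M) *
        C k (k.1 + p.1 * M, k.2 + p.2 * M))
      (∑ k' ∈ s, congrPair M h k k' * C k k') := by
  have hcomp : (fun p : ℤ × ℤ => star (h k) * h (k.1 + p.1 * M, k.2 + p.2 * M) *
        C k (k.1 + p.1 * M, k.2 + p.2 * M)) =
      (fun k' => congrPair M h k k' * C k k') ∘
        fun p : ℤ × ℤ => (k.1 + p.1 * M, k.2 + p.2 * M) := by
    funext p
    rw [Function.comp_apply, congrPair, if_pos ⟨⟨-p.1, by ring⟩, ⟨-p.2, by ring⟩⟩]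
  rw [hcomp, (injective_add_mul_nat hM k).hasSum_iff]
  · exact hasSum_sum_of_ne_finset_zero fun k' hk' => by simp [congrPair, hs k' hk']
  · rintro k' hk'
    rw [congrPair, if_neg, zero_mul]
    rintro ⟨⟨a, ha⟩, ⟨b, hb⟩⟩
    exact hk' ⟨(-a, -b), Prod.ext (by simp; linarith) (by simp; linarith)⟩

theorem stmt_3_general (L M N : ℕ) (hM : 0 < M) (hN : 0 < N)
    (g : ℕ → ℤ × ℤ → ℍ) (hg : ∀ l < L, MemL2 (g l))
    (hreal : ∀ l < L, IsRealValued (g l))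
    (h : ℤ × ℤ → ℍ) (hsupp : (Function.support h).Finite) :
    ((frameSum L M N g h : ℝ) : ℍ) =
      (M : ℍ) ^ 2 * ∑' k : ℤ × ℤ, ((‖h k‖ ^ 2 : ℝ) : ℍ) * gaborG L M N g k 0 +
      (M : ℍ) ^ 2 * ∑' k : ℤ × ℤ, ∑' p : {p : ℤ × ℤ // p ≠ 0},
        star (h k) * h (k.1 + (p : ℤ × ℤ).1 * (M : ℤ), k.2 + (p : ℤ × ℤ).2 * (M : ℤ)) *
          gaborG L M N g k (p : ℤ × ℤ) := by
  set s := hsupp.toFinset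
  have hs : ∀ k ∉ s, h k = 0 := fun k hk => by simpa [s] using hk
  have hrow (k : ℤ × ℤ) : ((‖h k‖ ^ 2 : ℝ) : ℍ) * gaborG L M N g k 0 +
      ∑' p : {p : ℤ × ℤ // p ≠ 0},
        star (h k) * h (k.1 + (p : ℤ × ℤ).1 * M, k.2 + (p : ℤ × ℤ).2 * M) * gaborG L M N g k p =
      ∑ k' ∈ s, congrPair M h k k' * crossCorr L N g k k' := by
    have H := hasSum_shift_eq_sum_congrPair hM.ne' hs (crossCorr L N g) k
    rw [← H.tsum_eq, ← H.summable.add_tsum_subtype_ne 0, Quaternion.coe_norm_sq_eq_star_mul_self]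
    simp only [gaborG_eq_crossCorr, Prod.fst_zero, Prod.snd_zero, zero_mul, add_zero]
  rw [coe_frameSum hM.ne' hN.ne' hg hreal hs, ← mul_add, tsum_eq_sum (s := s),
    tsum_eq_sum (s := s), ← sum_add_distrib, sum_congr rfl fun k _ => hrow k]
  all_goals intro k hk; simp [hs k hk]

/-- decomposition of the frame sum as `F₁(h) + F₂(h)` for real-valued
windows and finitely supported `h`. -/
theorem stmt_3 (L M N : ℕ) (hL : 0 < L) (hM : 0 < M) (hN : 0 < N)
    (g : ℕ → ℤ × ℤ → ℍ) (hg : ∀ l < L, MemL2 (g l))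
    (hreal : ∀ l < L, IsRealValued (g l))
    (h : ℤ × ℤ → ℍ) (hsupp : (Function.support h).Finite) :
    ((frameSum L M N g h : ℝ) : ℍ) =
      (M : ℍ) ^ 2 * ∑' k : ℤ × ℤ, ((‖h k‖ ^ 2 : ℝ) : ℍ) * gaborG L M N g k 0 +
      (M : ℍ) ^ 2 * ∑' k : ℤ × ℤ, ∑' p : {p : ℤ × ℤ // p ≠ 0},
        star (h k) * h (k.1 + (p : ℤ × ℤ).1 * (M : ℤ), k.2 + (p : ℤ × ℤ).2 * (M : ℤ)) *
          gaborG L M N g k (p : ℤ × ℤ) :=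
  stmt_3_general L M N hM hN g hg hreal h hsupp
end
end

section
/- Let L, M, N be positive integers and let g_0, …, g_{L−1} ∈ ℓ²(ℤ²,ℍ) be such that G(g,L,M,N) is a Parseval frame for ℓ²(ℤ²,ℍ). Then G(g,L,M,N) is an orthonormal system (i.e. ⟨E_{m/M}T_{nN}g_l, E_{m'/M}T_{n'N}g_{l'}⟩ = 1 if (l,n,m) = (l',n',m') and = 0 otherwise) if and only if N² = L·M². -/
noncomputable section

open scoped Real

/-! Testing the Parseval identity on the unit vectors `δ_j` gives
`M² ∑_l ∑_n |g_l(j - nN)|² = 1` for every `j`; summing over `j` in the fundamental domain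
`{0,…,N-1}²` of `Nℤ²` yields `M² ∑_l ‖g_l‖² = N²`. Orthonormality means `‖g_l‖ = 1`, hence
`N² = L M²`. Conversely, if `N² = L M²` then `∑_l ‖g_l‖² = L`, while the Parseval identity for
`h = g_l` gives `‖g_l‖⁴ ≤ ‖g_l‖²`; so every `‖g_l‖ = 1`. The Parseval identity for a unit atom
`h`, whose own coefficient already has modulus `1`, then forces all its other coefficients to
vanish. -/

namespace QuaternionGabor

open Filter Topology

lemma norm_eI (θ : ℝ) : ‖eI θ‖ = 1 := by
  have h : ‖eI θ‖ * ‖eI θ‖ = 1 := by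
    rw [← Quaternion.normSq_eq_norm_mul_self, Quaternion.normSq_def']
    simp [eI]
  nlinarith [norm_nonneg (eI θ)]

lemma norm_eJ (θ : ℝ) : ‖eJ θ‖ = 1 := by
  have h : ‖eJ θ‖ * ‖eJ θ‖ = 1 := by
    rw [← Quaternion.normSq_eq_norm_mul_self, Quaternion.normSq_def']
    simp [eJ]
  nlinarith [norm_nonneg (eJ θ)]

lemma norm_gaborAtom_apply (M N : ℕ) (w : ℤ × ℤ → ℍ) (m : ℕ × ℕ) (n k : ℤ × ℤ) :
    ‖gaborAtom M N w m n k‖ = ‖w (k.1 - n.1 * N, k.2 - n.2 * N)‖ := by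
  simp [gaborAtom, norm_eI, norm_eJ]

lemma gaborAtom_zero (M N : ℕ) (w : ℤ × ℤ → ℍ) : gaborAtom M N w 0 0 = w := by
  ext k : 1
  have eI_zero : eI 0 = 1 := by ext <;> simp [eI] <;> rfl
  have eJ_zero : eJ 0 = 1 := by ext <;> simp [eJ] <;> rfl
  simp [gaborAtom, eI_zero, eJ_zero]

lemma norm_sq_gaborAtom_eq_comp (M N : ℕ) (w : ℤ × ℤ → ℍ) (m : ℕ × ℕ) (n : ℤ × ℤ) :
    (fun k => ‖gaborAtom M N w m n k‖ ^ 2) =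
      (fun k => ‖w k‖ ^ 2) ∘ (Equiv.subRight (n.1 * N)).prodCongr (Equiv.subRight (n.2 * N)) := by
  ext k
  simp [norm_gaborAtom_apply]
  rfl

lemma memL2_gaborAtom {M N : ℕ} {w : ℤ × ℤ → ℍ} (hw : MemL2 w) (m : ℕ × ℕ) (n : ℤ × ℤ) :
    MemL2 (gaborAtom M N w m n) := by
  rw [MemL2, norm_sq_gaborAtom_eq_comp, Equiv.summable_iff]
  exact hw

lemma normSq2_gaborAtom (M N : ℕ) (w : ℤ × ℤ → ℍ) (m : ℕ × ℕ) (n : ℤ × ℤ) :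
    normSq2 (gaborAtom M N w m n) = normSq2 w := by
  rw [normSq2, norm_sq_gaborAtom_eq_comp]
  exact Equiv.tsum_eq _ fun k => ‖w k‖ ^ 2

lemma summable_star_mul {f h : ℤ × ℤ → ℍ} (hf : MemL2 f) (hh : MemL2 h) :
    Summable fun k => star (f k) * h k := by
  refine Summable.of_norm_bounded ((hf.add hh).mul_left (1 / 2)) fun k => ?_
  rw [norm_mul, Quaternion.norm_star]
  nlinarith [sq_nonneg (‖f k‖ - ‖h k‖)]

lemma qpair_self {f : ℤ × ℤ → ℍ} (hf : MemL2 f) : qpair f f = (normSq2 f : ℍ) := by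
  have hterm : (fun k => star (f k) * f k) = fun k => algebraMap ℝ ℍ (‖f k‖ ^ 2) := by
    ext k : 1
    rw [Quaternion.star_mul_self, Quaternion.normSq_eq_norm_mul_self, sq]
    rfl
  rw [qpair, hterm]
  exact (hf.hasSum.map (algebraMap ℝ ℍ) (continuous_algebraMap ℝ ℍ)).tsum_eq

lemma memL2_single (j : ℤ × ℤ) : MemL2 (Pi.single j 1) :=
  summable_of_ne_finset_zero (s := {j}) fun k hk => by
    simp [Pi.single_eq_of_ne (Finset.notMem_singleton.1 hk)]

lemma normSq2_single (j : ℤ × ℤ) : normSq2 (Pi.single j 1) = 1 := by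
  rw [normSq2, tsum_eq_single j fun k hk => by simp [Pi.single_eq_of_ne hk]]
  simp

lemma qpair_single (f : ℤ × ℤ → ℍ) (j : ℤ × ℤ) : qpair f (Pi.single j 1) = star (f j) := by
  rw [qpair, tsum_eq_single j fun k hk => by simp [Pi.single_eq_of_ne hk]]
  simp

lemma frameSum_single (L M N : ℕ) (g : ℕ → ℤ × ℤ → ℍ) (j : ℤ × ℤ) :
    frameSum L M N g (Pi.single j 1) = (M : ℝ) ^ 2 * winSum L N g j := by
  simp only [frameSum, winSum, qpair_single, Quaternion.norm_star, norm_gaborAtom_apply,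
    Finset.sum_const, Finset.card_product, Finset.card_range, nsmul_eq_mul, tsum_mul_left,
    Finset.mul_sum]
  push_cast [sq]
  rfl

lemma mul_winSum_eq_one_of_isParseval {L M N : ℕ} {g : ℕ → ℤ × ℤ → ℍ} (hpar : IsParseval L M N g)
    (j : ℤ × ℤ) : (M : ℝ) ^ 2 * winSum L N g j = 1 := by
  rw [← frameSum_single, hpar _ (memL2_single j), normSq2_single]

lemma tsum_eq_sum_tsum_latticeShift {N : ℕ} (hN : 0 < N) {f : ℤ × ℤ → ℝ} (hf : Summable f) :
    ∑' k, f k = ∑ j : Fin N × Fin N, ∑' n : ℤ × ℤ, f (j.1 - n.1 * N, j.2 - n.2 * N) := by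
  have : NeZero N := ⟨hN.ne'⟩
  let e₁ : Fin N × ℤ ≃ ℤ := (Equiv.prodComm _ _).trans
    (((Equiv.neg ℤ).prodCongr (Equiv.refl _)).trans (Int.divModEquiv N).symm)
  let e : (Fin N × Fin N) × (ℤ × ℤ) ≃ ℤ × ℤ :=
    (Equiv.prodProdProdComm _ _ _ _).trans (e₁.prodCongr e₁)
  have he : ∀ p, e p = (p.1.1 - p.2.1 * N, p.1.2 - p.2.2 * N) := by
    rintro ⟨j, n⟩
    simp only [e, e₁, Equiv.trans_apply, Equiv.prodCongr_apply, Equiv.prodComm_apply,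
      Equiv.prodProdProdComm_apply, Prod.map, Equiv.neg_apply, Equiv.refl_apply,
      Int.divModEquiv_symm_apply, Prod.swap]
    ext <;> simp only <;> ring
  rw [← e.tsum_eq, Summable.tsum_prod (f := fun p => f (e p)) ((e.summable_iff).2 hf),
    tsum_fintype]
  simp only [he]

lemma sum_normSq2_eq_of_isParseval {L M N : ℕ} (hN : 0 < N) {g : ℕ → ℤ × ℤ → ℍ}
    (hg : ∀ l < L, MemL2 (g l)) (hpar : IsParseval L M N g) :
    (M : ℝ) ^ 2 * ∑ l ∈ Finset.range L, normSq2 (g l) = (N : ℝ) ^ 2 := by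
  have hdomain : ∑ l ∈ Finset.range L, normSq2 (g l) =
      ∑ j : Fin N × Fin N, winSum L N g (j.1, j.2) := by
    simp only [normSq2]
    rw [Finset.sum_congr rfl fun l hl =>
      tsum_eq_sum_tsum_latticeShift hN (hg l (Finset.mem_range.1 hl)), Finset.sum_comm]
    rfl
  rw [hdomain, Finset.mul_sum]
  simp only [mul_winSum_eq_one_of_isParseval hpar]
  simp [sq]

lemma summable_norm_qpair_gaborAtom_sq {M N : ℕ} (hN : 0 < N) {w φ : ℤ × ℤ → ℍ} (hw : MemL2 w)
    (F : Finset (ℤ × ℤ)) (hφ : ∀ k ∉ F, φ k = 0) (m : ℕ × ℕ) :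
    Summable fun n => ‖qpair (gaborAtom M N w m n) φ‖ ^ 2 := by
  have hshift : ∀ k : ℤ × ℤ,
      Function.Injective fun n : ℤ × ℤ => (k.1 - n.1 * N, k.2 - n.2 * N) := by
    intro k n n' h
    have hN' : (N : ℤ) ≠ 0 := by exact_mod_cast hN.ne'
    simp only [Prod.mk.injEq, sub_right_inj] at h
    exact Prod.ext (mul_right_cancel₀ hN' h.1) (mul_right_cancel₀ hN' h.2)
  refine Summable.of_nonneg_of_le (fun n => by positivity) (fun n => ?_)
    ((summable_sum (s := F) fun k _ =>
      (hw.comp_injective (hshift k)).mul_right (‖φ k‖ ^ 2)).mul_left (F.card : ℝ))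
  have hfin : qpair (gaborAtom M N w m n) φ = ∑ k ∈ F, star (gaborAtom M N w m n k) * φ k :=
    tsum_eq_sum fun k hk => by rw [hφ k hk, mul_zero]
  calc ‖qpair (gaborAtom M N w m n) φ‖ ^ 2
      ≤ (∑ k ∈ F, ‖w (k.1 - n.1 * N, k.2 - n.2 * N)‖ * ‖φ k‖) ^ 2 := by
        rw [hfin]
        gcongr
        refine (norm_sum_le _ _).trans_eq (Finset.sum_congr rfl fun k _ => ?_)
        rw [norm_mul, Quaternion.norm_star, norm_gaborAtom_apply]
    _ ≤ F.card * ∑ k ∈ F, (‖w (k.1 - n.1 * N, k.2 - n.2 * N)‖ * ‖φ k‖) ^ 2 :=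
        sq_sum_le_card_mul_sum_sq
    _ = _ := by simp only [mul_pow, Function.comp_apply]

lemma sum_le_frameSum {L M N : ℕ} {g : ℕ → ℤ × ℤ → ℍ} {h : ℤ × ℤ → ℍ}
    (hsum : ∀ l < L, Summable fun n => ∑ m ∈ msq M, ‖qpair (gaborAtom M N (g l) m n) h‖ ^ 2)
    (P : Finset (ℕ × (ℤ × ℤ) × (ℕ × ℕ))) (hP : ∀ p ∈ P, p.1 < L ∧ p.2.2 ∈ msq M) :
    ∑ p ∈ P, ‖qpair (gaborAtom M N (g p.1) p.2.2 p.2.1) h‖ ^ 2 ≤ frameSum L M N g h := by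
  classical
  have hsub : P ⊆ Finset.range L ×ˢ (P.image fun p => p.2.1) ×ˢ msq M := fun p hp =>
    Finset.mem_product.2 ⟨Finset.mem_range.2 (hP p hp).1,
      Finset.mem_product.2 ⟨Finset.mem_image_of_mem _ hp, (hP p hp).2⟩⟩
  refine (Finset.sum_le_sum_of_subset_of_nonneg hsub fun _ _ _ => by positivity).trans ?_
  rw [Finset.sum_product, frameSum]
  refine Finset.sum_le_sum fun l hl => ?_
  rw [Finset.sum_product]
  exact (hsum l (Finset.mem_range.1 hl)).sum_le_tsum _ fun n _ => by positivity

lemma tendsto_qpair_indicator {f h : ℤ × ℤ → ℍ} (hf : MemL2 f) (hh : MemL2 h) :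
    Tendsto (fun F : Finset (ℤ × ℤ) => qpair f ((F : Set (ℤ × ℤ)).indicator h)) atTop
      (𝓝 (qpair f h)) := by
  have hfin : ∀ F : Finset (ℤ × ℤ),
      qpair f ((F : Set (ℤ × ℤ)).indicator h) = ∑ k ∈ F, star (f k) * h k := fun F => by
    rw [qpair, tsum_eq_sum (s := F) fun k hk => by simp [hk]]
    exact Finset.sum_congr rfl fun k hk => by simp [hk]
  simp only [hfin]
  exact (summable_star_mul hf hh).hasSum

/- Without this, the `tsum` over `n` in `frameSum` could be the junk value `0`. Truncations of
`h` to finite sets are finitely supported, so their partial frame sums are bounded through the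
Parseval identity, and the coefficients of `h` are the limits of theirs. -/
lemma summable_of_isParseval {L M N : ℕ} (hN : 0 < N) {g : ℕ → ℤ × ℤ → ℍ}
    (hg : ∀ l < L, MemL2 (g l)) (hpar : IsParseval L M N g) {h : ℤ × ℤ → ℍ} (hh : MemL2 h)
    {l : ℕ} (hl : l < L) :
    Summable fun n => ∑ m ∈ msq M, ‖qpair (gaborAtom M N (g l) m n) h‖ ^ 2 := by
  refine summable_of_sum_le (fun n => by positivity) (c := normSq2 h) fun S => ?_
  have hsq_le : ∀ F : Finset (ℤ × ℤ), ∀ k, ‖(F : Set (ℤ × ℤ)).indicator h k‖ ^ 2 ≤ ‖h k‖ ^ 2 :=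
    fun F k => by gcongr; exact norm_indicator_le_norm_self h k
  have htrunc : ∀ F : Finset (ℤ × ℤ),
      ∑ n ∈ S, ∑ m ∈ msq M, ‖qpair (gaborAtom M N (g l) m n) ((F : Set _).indicator h)‖ ^ 2
        ≤ normSq2 h := by
    intro F
    have hF : MemL2 ((F : Set (ℤ × ℤ)).indicator h) :=
      Summable.of_nonneg_of_le (fun k => by positivity) (hsq_le F) hh
    have hsumF : ∀ l' < L, Summable fun n =>
        ∑ m ∈ msq M, ‖qpair (gaborAtom M N (g l') m n) ((F : Set _).indicator h)‖ ^ 2 :=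
      fun l' hl' => summable_sum fun m _ =>
        summable_norm_qpair_gaborAtom_sq hN (hg l' hl') F (fun k hk => by simp [hk]) m
    calc ∑ n ∈ S, ∑ m ∈ msq M, ‖qpair (gaborAtom M N (g l) m n) ((F : Set _).indicator h)‖ ^ 2
        = ∑ p ∈ {l} ×ˢ S ×ˢ msq M,
            ‖qpair (gaborAtom M N (g p.1) p.2.2 p.2.1) ((F : Set _).indicator h)‖ ^ 2 := by
          rw [Finset.sum_product, Finset.sum_singleton, Finset.sum_product]
      _ ≤ frameSum L M N g ((F : Set _).indicator h) :=
          sum_le_frameSum hsumF _ fun p hp => by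
            obtain ⟨hp₁, hp₂⟩ := Finset.mem_product.1 hp
            exact ⟨Finset.mem_singleton.1 hp₁ ▸ hl, (Finset.mem_product.1 hp₂).2⟩
      _ = normSq2 ((F : Set _).indicator h) := hpar _ hF
      _ ≤ normSq2 h := hF.tsum_le_tsum (hsq_le F) hh
  refine le_of_tendsto' (tendsto_finsetSum _ fun n _ => tendsto_finsetSum _ fun m _ =>
    ((tendsto_qpair_indicator (memL2_gaborAtom (hg l hl) m n) hh).norm).pow 2) htrunc

lemma zero_mem_msq {M : ℕ} (hM : 0 < M) : (0 : ℕ × ℕ) ∈ msq M :=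
  Finset.mem_product.2 ⟨Finset.mem_range.2 hM, Finset.mem_range.2 hM⟩

lemma normSq2_eq_one_of_isON {L M N : ℕ} (hM : 0 < M) {g : ℕ → ℤ × ℤ → ℍ}
    (hg : ∀ l < L, MemL2 (g l)) (hON : IsON L M N g) {l : ℕ} (hl : l < L) :
    normSq2 (g l) = 1 := by
  have h := hON l l hl hl _ (zero_mem_msq hM) _ (zero_mem_msq hM) 0 0
  rw [if_pos ⟨rfl, rfl, rfl⟩, gaborAtom_zero, qpair_self (hg l hl)] at h
  exact Quaternion.coe_injective (h.trans Quaternion.coe_one.symm)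

lemma normSq2_le_one_of_isParseval {L M N : ℕ} (hM : 0 < M) (hN : 0 < N)
    {g : ℕ → ℤ × ℤ → ℍ} (hg : ∀ l < L, MemL2 (g l)) (hpar : IsParseval L M N g)
    {l : ℕ} (hl : l < L) : normSq2 (g l) ≤ 1 := by
  have hcoeff := sum_le_frameSum (fun l' hl' => summable_of_isParseval hN hg hpar (hg l hl) hl')
    {(l, 0, 0)} (by simp [hl, hM])
  rw [Finset.sum_singleton] at hcoeff
  dsimp only at hcoeff
  rw [gaborAtom_zero, qpair_self (hg l hl), Quaternion.norm_coe,
    Real.norm_eq_abs, sq_abs, hpar _ (hg l hl)] at hcoeff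
  have h0 : 0 ≤ normSq2 (g l) := tsum_nonneg fun k => sq_nonneg _
  nlinarith

lemma isON_of_normSq2_eq_one {L M N : ℕ} (hN : 0 < N) {g : ℕ → ℤ × ℤ → ℍ}
    (hg : ∀ l < L, MemL2 (g l)) (hpar : IsParseval L M N g)
    (hone : ∀ l < L, normSq2 (g l) = 1) : IsON L M N g := by
  intro l l' hl hl' m hm m' hm' n n'
  set a := gaborAtom M N (g l') m' n'
  have ha : MemL2 a := memL2_gaborAtom (hg l' hl') m' n'
  have hnorm : normSq2 a = 1 := (normSq2_gaborAtom M N _ m' n').trans (hone l' hl')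
  have hself : qpair a a = 1 := by rw [qpair_self ha, hnorm, Quaternion.coe_one]
  split_ifs with heq
  · obtain ⟨rfl, rfl, rfl⟩ := heq
    exact hself
  · have hne : (l, n, m) ≠ (l', n', m') := by
      simp only [ne_eq, Prod.mk.injEq]
      tauto
    have hpair := sum_le_frameSum (fun l'' hl'' => summable_of_isParseval hN hg hpar ha hl'')
      {(l, n, m), (l', n', m')} (by
        simp only [Finset.mem_insert, Finset.mem_singleton, forall_eq_or_imp, forall_eq]
        exact ⟨⟨hl, hm⟩, hl', hm'⟩)
    rw [Finset.sum_pair hne, hpar a ha, hnorm] at hpair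
    have hpair' : ‖qpair (gaborAtom M N (g l) m n) a‖ ^ 2 + ‖qpair a a‖ ^ 2 ≤ 1 := hpair
    rw [hself, norm_one, one_pow] at hpair'
    exact norm_eq_zero.1 <| (pow_eq_zero_iff two_ne_zero).1 <|
      le_antisymm (by linarith) (by positivity)

end QuaternionGabor

open QuaternionGabor

theorem stmt_11_general (L M N : ℕ) (hM : 0 < M) (hN : 0 < N)
    (g : ℕ → ℤ × ℤ → ℍ) (hg : ∀ l < L, MemL2 (g l))
    (hpar : IsParseval L M N g) :
    IsON L M N g ↔ N ^ 2 = L * M ^ 2 := by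
  have hmass := sum_normSq2_eq_of_isParseval hN hg hpar
  constructor
  · intro hON
    rw [Finset.sum_congr rfl fun l hl => normSq2_eq_one_of_isON hM hg hON (Finset.mem_range.1 hl),
      Finset.sum_const, Finset.card_range, nsmul_one] at hmass
    exact_mod_cast (by linarith : (N : ℝ) ^ 2 = L * M ^ 2)
  · intro hsize
    have hle : ∀ l ∈ Finset.range L, normSq2 (g l) ≤ 1 := fun l hl =>
      normSq2_le_one_of_isParseval hM hN hg hpar (Finset.mem_range.1 hl)
    have htotal : ∑ l ∈ Finset.range L, normSq2 (g l) = ∑ l ∈ Finset.range L, (1 : ℝ) := by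
      refine mul_left_cancel₀ (by positivity : (M : ℝ) ^ 2 ≠ 0) ?_
      rw [hmass, Finset.sum_const, Finset.card_range, nsmul_one]
      exact_mod_cast hsize.trans (mul_comm _ _)
    exact isON_of_normSq2_eq_one hN hg hpar fun l hl =>
      (Finset.sum_eq_sum_iff_of_le hle).1 htotal l (Finset.mem_range.2 hl)

/-- a Parseval Gabor frame is an orthonormal basis iff `N² = L M²`. -/
theorem stmt_11 (L M N : ℕ) (hL : 0 < L) (hM : 0 < M) (hN : 0 < N)
    (g : ℕ → ℤ × ℤ → ℍ) (hg : ∀ l < L, MemL2 (g l))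
    (hpar : IsParseval L M N g) :
    IsON L M N g ↔ N ^ 2 = L * M ^ 2 :=
  stmt_11_general L M N hM hN g hg hpar
end
end
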